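/- arXiv:2012.14038 — 8 statements merged into one kernel-verified Lean document; each statement's English description precedes it below -/
import Mathlib

section
/- Let A = A₁ × ⋯ × A_k be a finite product of nonzero commutative integral domains and let τ₁, …, τ_k ∈ A satisfy that each τ_i is not nilpotent and τ_i·τ_j is nilpotent for i ≠ j. Then there is a (unique) bijection σ of {1,…,k} such that for each i the component of τ_{σ(i)} in A_i is nonzero, while the component of τ_{σ(j)} in A_i is zero for all j ≠ i. -/
/-! A product of domains is reduced, so nilpotent means zero, and a product `x * y` vanishes
exactly when, in every factor, one of the two components vanishes. So elements with pairwise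
zero products have disjoint supports, and a nonzero element has nonempty support. Choosing one
factor in the support of each element gives an injective, hence bijective, self-map of the
finite index set; its inverse is the permutation. -/

section DisjointSupports

variable {ι κ : Type*} {A : ι → Type*} [∀ i, MulZeroClass (A i)] [∀ i, NoZeroDivisors (A i)]

theorem eq_of_apply_ne_zero_of_pairwise_mul_eq_zero {τ : κ → ∀ i, A i}
    (hmul : Pairwise fun m m' => τ m * τ m' = 0) {m m' : κ} {i : ι}
    (hm : τ m i ≠ 0) (hm' : τ m' i ≠ 0) : m = m' := by
  by_contra hne
  have h : τ m i * τ m' i = 0 := congr_fun (hmul hne) i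
  exact mul_ne_zero hm hm' h

theorem existsUnique_perm_apply_ne_zero_of_pairwise_mul_eq_zero [Finite ι]
    {τ : ι → ∀ i, A i} (hne : ∀ m, τ m ≠ 0) (hmul : Pairwise fun m m' => τ m * τ m' = 0) :
    ∃! σ : Equiv.Perm ι, ∀ i, τ (σ i) i ≠ 0 ∧ ∀ j, j ≠ i → τ (σ j) i = 0 := by
  have hsupp : ∀ m, ∃ i, τ m i ≠ 0 := fun m => Function.ne_iff.mp (hne m)
  choose f hf using hsupp
  have hinj : Function.Injective f := fun m m' h =>
    eq_of_apply_ne_zero_of_pairwise_mul_eq_zero hmul (hf m) (h ▸ hf m')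
  let e := Equiv.ofBijective f (Finite.injective_iff_bijective.mp hinj)
  have he : ∀ i, τ (e.symm i) i ≠ 0 := fun i => by
    have hfi : f (e.symm i) = i := e.apply_symm_apply i
    have h := hf (e.symm i)
    rwa [hfi] at h
  refine ⟨e.symm, fun i => ⟨he i, fun j hji => ?_⟩, fun σ hσ => ?_⟩
  · by_contra hj
    exact hji (e.symm.injective
      (eq_of_apply_ne_zero_of_pairwise_mul_eq_zero hmul hj (he i)))
  · exact Equiv.ext fun i => eq_of_apply_ne_zero_of_pairwise_mul_eq_zero hmul (hσ i).1 (he i)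

end DisjointSupports

/-- A maximal Thom system in a product of `k` nonzero integral domains singles out
exactly one factor per element, via a unique permutation. -/
theorem stmt_2 (k : ℕ) (A : Fin k → Type*) [∀ i, CommRing (A i)]
    [∀ i, IsDomain (A i)] (τ : Fin k → (∀ i, A i))
    (hnn : ∀ m, ¬ IsNilpotent (τ m))
    (hpair : ∀ m m', m ≠ m' → IsNilpotent (τ m * τ m')) :
    ∃! σ : Equiv.Perm (Fin k), ∀ i : Fin k,
      (τ (σ i)) i ≠ 0 ∧ ∀ j : Fin k, j ≠ i → (τ (σ j)) i = 0 :=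
  existsUnique_perm_apply_ne_zero_of_pairwise_mul_eq_zero
    (fun m h => hnn m (h ▸ IsNilpotent.zero))
    (fun m m' hne => isNilpotent_iff_eq_zero.mp (hpair m m' hne))
end

section
/- Let A = A₁ × ⋯ × A_k be a finite product of nonzero commutative integral domains. Then the standard idempotents e₁, …, e_k (where e_i has component 1 in A_i and 0 elsewhere) form a strict Thom system: each e_i is not nilpotent, e_i·e_j = 0 for i ≠ j, and any collection of elements of A such that each element is non-nilpotent and pairwise products are nilpotent has at most k elements. -/
/-!
In a product of reduced rings nilpotent means zero, so a family as in the statement consists of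
nonzero elements with pairwise zero products. Choosing for each member a coordinate where it is
nonzero gives an injection into the factors: if two members shared such a coordinate, their
product would vanish there, contradicting that the factor is a domain.
-/

theorem Pi.card_le_of_pairwise_mul_eq_zero {ι κ : Type*} [Fintype ι] [Fintype κ]
    {R : ι → Type*} [∀ i, MulZeroClass (R i)] [∀ i, NoZeroDivisors (R i)]
    (τ : κ → ∀ i, R i) (hτ : ∀ m, τ m ≠ 0) (hmul : Pairwise fun m m' => τ m * τ m' = 0) :
    Fintype.card κ ≤ Fintype.card ι := by
  have hsupport : ∀ m, ∃ i, τ m i ≠ 0 := fun m => by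
    by_contra! h
    exact hτ m (funext h)
  choose f hf using hsupport
  refine Fintype.card_le_of_injective f fun m m' hff => ?_
  by_contra hne
  rcases mul_eq_zero.mp (congr_fun (hmul hne) (f m)) with h | h
  · exact hf m h
  · exact hf m' (hff ▸ h)

/-- The standard idempotents in a finite product of `k` nonzero commutative integral
domains form a strict Thom system. -/
theorem stmt_3 (k : ℕ) (A : Fin k → Type*) [∀ i, CommRing (A i)]
    [∀ i, IsDomain (A i)] (e : Fin k → (∀ i, A i))
    (he : ∀ i j, e i j = if i = j then 1 else 0) :
    (∀ i, ¬ IsNilpotent (e i)) ∧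
    (∀ i j, i ≠ j → e i * e j = 0) ∧
    (∀ (l : ℕ) (τ : Fin l → (∀ i, A i)),
      (∀ m, ¬ IsNilpotent (τ m)) →
      (∀ m m', m ≠ m' → IsNilpotent (τ m * τ m')) → l ≤ k) := by
  have he_single : ∀ i, e i = Pi.single i 1 := fun i => funext fun j => by
    obtain rfl | hij := eq_or_ne i j <;> simp [*]
  refine ⟨fun i => ?_, fun i j hij => ?_, fun l τ hτ hmul => ?_⟩
  · rw [isNilpotent_iff_eq_zero, he_single, Pi.single_eq_zero_iff]
    exact one_ne_zero
  · rw [he_single i, ← Pi.single_mul_left, he, if_neg hij.symm, mul_zero, Pi.single_zero]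
  · simp only [isNilpotent_iff_eq_zero] at hτ hmul
    simpa only [Fintype.card_fin] using Pi.card_le_of_pairwise_mul_eq_zero τ hτ hmul
end

section
/- Let S be a commutative ring graded in nonnegative degrees and A a graded commutative S-algebra (with S mapping to A by a degree-preserving homomorphism). Suppose A is generated as an S-module by finitely many homogeneous elements, all of degree at most d. Then any product of d+1 homogeneous elements of A of positive degree lies in S⁺·A, where S⁺ ⊂ S is the ideal of elements of positive degree. Consequently (A⁺)^{d+1} ⊆ S⁺·A, where A⁺ is the ideal of A generated by homogeneous elements of positive degree. -/
/-!
Let `S⁺A` be the extension of the irrelevant ideal of `S` along the degree-preserving map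
`S → A`; it is a homogeneous ideal. The elements of `A` whose components of degree `> d` all lie
in `S⁺A` form an `S`-submodule: splitting `s = s₀ + s⁺` into its degree-zero and positive parts,
`(s x)ₙ = s₀ xₙ + (s⁺ x)ₙ`. This submodule contains the generators, hence is all of `A`. A product
of `d + 1` homogeneous elements of positive degree is homogeneous of degree `> d`, so it lies in
`S⁺A`.
-/

open DirectSum HomogeneousIdeal

section

variable {S A : Type*} [CommRing S] [CommRing A] [Algebra S A]
  {𝒮 : ℕ → AddSubgroup S} [GradedRing 𝒮] {𝒜 : ℕ → AddSubgroup A} [GradedRing 𝒜]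

theorem sub_decompose_zero_mem_irrelevant (s : S) : s - decompose 𝒮 s 0 ∈ 𝒮₊ := by
  rw [mem_irrelevant_iff, map_sub, GradedRing.proj_apply, GradedRing.proj_apply,
    decompose_of_mem_same 𝒮 (decompose 𝒮 s 0).2, sub_self]

variable (𝒮 𝒜) in
def algebraMapGradedRingHom (hcompat : ∀ n, ∀ s ∈ 𝒮 n, algebraMap S A s ∈ 𝒜 n) : 𝒮 →+*ᵍ 𝒜 :=
  ⟨algebraMap S A, hcompat _ _⟩

variable (hcompat : ∀ n, ∀ s ∈ 𝒮 n, algebraMap S A s ∈ 𝒜 n)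

theorem decompose_algebraMap_mul_mem_map_irrelevant (s : S) {x : A} {n : ℕ}
    (hx : (decompose 𝒜 x n : A) ∈ (𝒮₊).map (algebraMapGradedRingHom 𝒮 𝒜 hcompat)) :
    (decompose 𝒜 (algebraMap S A s * x) n : A) ∈
      (𝒮₊).map (algebraMapGradedRingHom 𝒮 𝒜 hcompat) := by
  have hsplit : s = decompose 𝒮 s 0 + (s - decompose 𝒮 s 0) := (add_sub_cancel _ _).symm
  rw [hsplit, map_add, add_mul, decompose_add, DirectSum.add_apply, AddSubgroup.coe_add]
  refine add_mem ?_ ?_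
  · rw [coe_decompose_mul_of_left_mem_of_le 𝒜 (hcompat 0 _ (decompose 𝒮 s 0).2) n.zero_le,
      Nat.sub_zero]
    exact Ideal.mul_mem_left _ _ hx
  · exact HomogeneousIdeal.mem_iff.mp <| ((𝒮₊).map _).isHomogeneous n <|
      Ideal.mul_mem_right _ _ <| Ideal.mem_map_of_mem _ (sub_decompose_zero_mem_irrelevant s)

theorem decompose_mem_map_irrelevant_of_lt {d : ℕ} {gens : Set A}
    (hdeg : ∀ m ∈ gens, ∃ j ≤ d, m ∈ 𝒜 j) (hspan : Submodule.span S gens = ⊤) (a : A) {n : ℕ}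
    (hn : d < n) :
    (decompose 𝒜 a n : A) ∈ (𝒮₊).map (algebraMapGradedRingHom 𝒮 𝒜 hcompat) := by
  have ha : a ∈ Submodule.span S gens := hspan ▸ Submodule.mem_top
  induction ha using Submodule.span_induction with
  | mem m hm =>
    obtain ⟨j, hj, hmj⟩ := hdeg m hm
    rw [decompose_of_mem_ne 𝒜 hmj (by omega)]
    exact zero_mem _
  | zero => simp
  | add x y _ _ hx hy => simpa using add_mem hx hy
  | smul s x _ hx => simpa only [Algebra.smul_def] using
      decompose_algebraMap_mul_mem_map_irrelevant hcompat s hx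

theorem mem_map_irrelevant_of_mem_of_lt {d : ℕ} {gens : Set A}
    (hdeg : ∀ m ∈ gens, ∃ j ≤ d, m ∈ 𝒜 j) (hspan : Submodule.span S gens = ⊤) {a : A} {n : ℕ}
    (ha : a ∈ 𝒜 n) (hn : d < n) :
    a ∈ (𝒮₊).map (algebraMapGradedRingHom 𝒮 𝒜 hcompat) := by
  simpa [decompose_of_mem_same 𝒜 ha] using
    decompose_mem_map_irrelevant_of_lt hcompat hdeg hspan a hn

theorem prod_mem_map_irrelevant {d : ℕ} {gens : Set A}
    (hdeg : ∀ m ∈ gens, ∃ j ≤ d, m ∈ 𝒜 j) (hspan : Submodule.span S gens = ⊤)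
    {ι : Type*} {t : Finset ι} (ht : d < t.card) (f : ι → A)
    (hf : ∀ i ∈ t, ∃ n, 0 < n ∧ f i ∈ 𝒜 n) :
    ∏ i ∈ t, f i ∈ (𝒮₊).map (algebraMapGradedRingHom 𝒮 𝒜 hcompat) := by
  choose! deg hdeg_pos hf using hf
  refine mem_map_irrelevant_of_mem_of_lt hcompat hdeg hspan
    (SetLike.prod_mem_graded 𝒜 deg f hf) ?_
  calc d < t.card := ht
    _ = ∑ _i ∈ t, 1 := by simp
    _ ≤ ∑ i ∈ t, deg i := Finset.sum_le_sum hdeg_pos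

theorem span_image_algebraMap_positive_eq :
    Ideal.span (algebraMap S A '' {s : S | ∃ n, 0 < n ∧ s ∈ 𝒮 n}) =
      ((𝒮₊).map (algebraMapGradedRingHom 𝒮 𝒜 hcompat)).toIdeal := by
  rw [toIdeal_map, irrelevant_eq_span, Ideal.map_span]
  congr 2
  ext s
  simp

end

theorem Ideal.span_pow_le_of_prod_mem {R : Type*} [CommSemiring R] {X : Set R} {I : Ideal R}
    {k : ℕ} (h : ∀ f : Fin k → R, (∀ i, f i ∈ X) → ∏ i, f i ∈ I) : Ideal.span X ^ k ≤ I := by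
  rw [Ideal.span, Submodule.span_pow, Submodule.span_le]
  intro x hx
  obtain ⟨f, rfl⟩ := Set.mem_pow.mp hx
  rw [List.prod_ofFn]
  exact h (fun i => f i) (fun i => (f i).2)

/-- If a graded commutative `S`-algebra `A` (with `S` graded in nonnegative degrees and
the structure map degree-preserving) is generated as an `S`-module by finitely many
homogeneous elements of degree at most `d`, then any product of `d+1` homogeneous
positive-degree elements of `A` lies in `S⁺·A`; consequently `(A⁺)^(d+1) ⊆ S⁺·A`. -/
theorem stmt_4 (S A : Type*) [CommRing S] [CommRing A] [Algebra S A]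
    (𝒮 : ℕ → AddSubgroup S) [GradedRing 𝒮]
    (𝒜 : ℕ → AddSubgroup A) [GradedRing 𝒜]
    (hcompat : ∀ (n : ℕ) (s : S), s ∈ 𝒮 n → algebraMap S A s ∈ 𝒜 n)
    (d : ℕ) (gens : Finset A)
    (hdeg : ∀ m ∈ gens, ∃ j ≤ d, m ∈ 𝒜 j)
    (hspan : Submodule.span S (gens : Set A) = ⊤) :
    (∀ f : Fin (d + 1) → A, (∀ i, ∃ n, 0 < n ∧ f i ∈ 𝒜 n) →
      (∏ i, f i) ∈ Ideal.span ((algebraMap S A) '' {s : S | ∃ n, 0 < n ∧ s ∈ 𝒮 n})) ∧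
    (Ideal.span {a : A | ∃ n, 0 < n ∧ a ∈ 𝒜 n}) ^ (d + 1) ≤
      Ideal.span ((algebraMap S A) '' {s : S | ∃ n, 0 < n ∧ s ∈ 𝒮 n}) := by
  rw [span_image_algebraMap_positive_eq hcompat]
  have hprod : ∀ f : Fin (d + 1) → A, (∀ i, ∃ n, 0 < n ∧ f i ∈ 𝒜 n) →
      ∏ i, f i ∈ ((𝒮₊).map (algebraMapGradedRingHom 𝒮 𝒜 hcompat)).toIdeal := fun f hf =>
    prod_mem_map_irrelevant hcompat hdeg hspan (by simp) f fun i _ => hf i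
  exact ⟨hprod, Ideal.span_pow_le_of_prod_mem hprod⟩
end

section
/- Let P be a finite partially ordered set. Call an element c ∈ P ramified if either c is minimal in P, or there exist two distinct ramified elements d₁ ≠ d₂ with d₁ ≤ c and d₂ ≤ c such that c is minimal among all elements e ∈ P with d₁ ≤ e and d₂ ≤ e. Then for every x ∈ P, the set of ramified elements c with c ≤ x is nonempty and has a unique maximal element. -/
/-!
Minimal elements are ramified, so below every `x` there is a ramified element, and by
finiteness a maximal one. If `c ≠ c'` were two maximal ramified elements below `x`, a minimal
common upper bound `B ≤ x` of `c` and `c'` would be ramified by the second forming rule, and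
maximality of `c` and of `c'` would force `c = B = c'`.
-/

/-- An element `c` of a poset is ramified if it is minimal, or if it is minimal among
the elements lying above two distinct ramified elements. -/
inductive Ramified {P : Type*} [PartialOrder P] : P → Prop
  | min (c : P) (h : ∀ d, d ≤ c → d = c) : Ramified c
  | step (c d₁ d₂ : P) (h₁ : Ramified d₁) (h₂ : Ramified d₂) (hne : d₁ ≠ d₂)
      (hle₁ : d₁ ≤ c) (hle₂ : d₂ ≤ c)
      (hmin : ∀ e, d₁ ≤ e → d₂ ≤ e → e ≤ c → e = c) : Ramified c

namespace Ramified

variable {P : Type*} [PartialOrder P]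

lemma of_isMin {c : P} (hc : IsMin c) : Ramified c :=
  .min c fun _ hd => le_antisymm hd (hc hd)

lemma of_minimal_upperBound {d₁ d₂ c : P} (h₁ : Ramified d₁) (h₂ : Ramified d₂) (hne : d₁ ≠ d₂)
    (hc : Minimal (fun e => d₁ ≤ e ∧ d₂ ≤ e) c) : Ramified c :=
  .step c d₁ d₂ h₁ h₂ hne hc.1.1 hc.1.2 fun _ he₁ he₂ hle => hc.eq_of_le ⟨he₁, he₂⟩ hle

variable [WellFoundedLT P]

lemma exists_le (x : P) : ∃ c ≤ x, Ramified c := by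
  obtain ⟨m, hmx, hm⟩ := exists_minimal_le_of_wellFoundedLT (fun _ => True) x trivial
  exact ⟨m, hmx, of_isMin fun _ hb => hm.2 trivial hb⟩

lemma eq_of_maximal_le {x c c' : P} (hc : Maximal (fun e => Ramified e ∧ e ≤ x) c)
    (hc' : Maximal (fun e => Ramified e ∧ e ≤ x) c') : c = c' := by
  by_contra hne
  obtain ⟨B, hBx, hB⟩ :=
    exists_minimal_le_of_wellFoundedLT (fun e => c ≤ e ∧ c' ≤ e) x ⟨hc.1.2, hc'.1.2⟩
  have hBram : Ramified B := of_minimal_upperBound hc.1.1 hc'.1.1 hne hB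
  exact hne ((hc.eq_of_le ⟨hBram, hBx⟩ hB.1.1).trans (hc'.eq_of_le ⟨hBram, hBx⟩ hB.1.2).symm)

end Ramified

/-- In a finite poset, for every `x` the set of ramified elements below `x` is nonempty
and has a unique maximal element. -/
theorem stmt_6 {P : Type*} [PartialOrder P] [Fintype P] (x : P) :
    ∃! c : P, Ramified c ∧ c ≤ x ∧
      ∀ c', Ramified c' → c' ≤ x → c ≤ c' → c' = c := by
  have maximal_iff (c : P) : (Ramified c ∧ c ≤ x ∧ ∀ c', Ramified c' → c' ≤ x → c ≤ c' → c' = c)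
      ↔ Maximal (fun e => Ramified e ∧ e ≤ x) c :=
    ⟨fun ⟨hc, hcx, hmax⟩ => ⟨⟨hc, hcx⟩, fun e he hle => (hmax e he.1 he.2 hle).le⟩,
      fun hc => ⟨hc.1.1, hc.1.2, fun _ h₁ h₂ hle => (hc.eq_of_le ⟨h₁, h₂⟩ hle).symm⟩⟩
  simp only [maximal_iff]
  obtain ⟨m, hmx, hm⟩ := Ramified.exists_le x
  obtain ⟨c, -, hc⟩ :=
    exists_maximal_ge_of_wellFoundedGT (fun e => Ramified e ∧ e ≤ x) m ⟨hm, hmx⟩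
  exact ⟨c, hc, fun _ hc' => Ramified.eq_of_maximal_le hc' hc⟩
end

section
/- Let K be a field, R = K[x₁,…,x_n] a polynomial ring graded with each x_i in positive degree, and H a graded commutative K-algebra with H⁰ = K, H finite-dimensional over K, and H concentrated in nonnegative degrees. Let A = R ⊗_K H with the total grading. Suppose f, g ∈ R are homogeneous and coprime, and a, b, a', b' ∈ A are homogeneous elements with a·b = a'·b', such that a − f⊗1, a' − f⊗1, b − g⊗1, and b' − g⊗1 are all nilpotent in A. Then a = a' and b = b'. -/
/-!
Let `Q_j` be the projection of `A = R ⊗ H` onto `H`-degree `j`; since `H` is finite-dimensional,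
an element of `A` vanishes once all its `Q_j` do. `Q_0` is multiplicative with values in
`R ⊗ 1 ≅ R`, which is reduced, so the nilpotency hypotheses say `Q_0 a = Q_0 a' = f ⊗ 1` and
`Q_0 b = Q_0 b' = g ⊗ 1`; in particular `a` and `a'` have degree `deg f`.

Put `u = a - a'` and `v = b - b'`, so that `u b + a' v = 0`. If `Q_i u = Q_i v = 0` for `i < j`,
the degree-`j` part of this identity reads `g Q_j u + f Q_j v = 0`. In coordinates with respect to
an `R`-basis of `A`, coprimality makes `f` divide `Q_j u`, whose polynomial degree `deg f - j` is
smaller than `deg f`; hence `Q_j u = 0`, and then `Q_j v = 0`. If `f = 0` then `g` is a unit, and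
the same argument runs with the roles of `(a, a')` and `(b, b')` exchanged.
-/

open TensorProduct

variable {K H : Type*} [Field K] [CommRing H] [Algebra K H]

/-- The degree-`m` part of the total grading on `K[x₁,…,x_n] ⊗ H`, where the
polynomial ring carries the weighted grading by `w` and `H` the grading `ℋ`. -/
noncomputable def tensorGrade {nv : ℕ} (w : Fin nv → ℕ) (ℋ : ℕ → Submodule K H) (m : ℕ) :
    Submodule K (MvPolynomial (Fin nv) K ⊗[K] H) :=
  Submodule.span K {z | ∃ i j, i + j = m ∧
    ∃ r ∈ MvPolynomial.weightedHomogeneousSubmodule K w i, ∃ h ∈ ℋ j, z = r ⊗ₜ[K] h}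

open Finset

theorem GradedAlgebra.proj_mul_eq_sum_antidiagonal {ι : Type*} [DecidableEq ι] [AddMonoid ι]
    [HasAntidiagonal ι] (𝒜 : ι → Submodule K H) [GradedAlgebra 𝒜] (x y : H) (n : ι) :
    GradedAlgebra.proj 𝒜 n (x * y) =
      ∑ ij ∈ antidiagonal n, GradedAlgebra.proj 𝒜 ij.1 x * GradedAlgebra.proj 𝒜 ij.2 y := by
  simp only [GradedAlgebra.proj_apply, DirectSum.decompose_mul,
    DirectSum.coe_mul_apply_eq_sum_antidiagonal]

theorem GradedAlgebra.proj_zero_one (𝒜 : ℕ → Submodule K H) [GradedAlgebra 𝒜] :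
    GradedAlgebra.proj 𝒜 0 (1 : H) = 1 := by
  rw [GradedAlgebra.proj_apply, DirectSum.decompose_of_mem_same 𝒜 SetLike.GradedOne.one_mem]

theorem GradedAlgebra.exists_sum_proj_eq_id [FiniteDimensional K H] (𝒜 : ℕ → Submodule K H)
    [GradedAlgebra 𝒜] : ∃ N, ∑ j ∈ range N, GradedAlgebra.proj 𝒜 j = LinearMap.id := by
  classical
  have := (DirectSum.Decomposition.isInternal 𝒜).submodule_iSupIndep.fintypeNeBotOfFiniteDimensional
  obtain ⟨N, hN⟩ := (Set.finite_coe_iff.mp (Finite.of_fintype {j // 𝒜 j ≠ ⊥})).bddAbove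
  refine ⟨N + 1, LinearMap.ext fun x => ?_⟩
  rw [LinearMap.sum_apply, LinearMap.id_apply]
  conv_rhs => rw [← DirectSum.sum_support_decompose 𝒜 x]
  refine (sum_subset (fun j hj => ?_) fun j _ hj => ?_).symm
  · rw [mem_range, Nat.lt_succ_iff]
    refine hN fun hbot => DFinsupp.mem_support_iff.mp hj ?_
    exact Subtype.ext ((Submodule.eq_bot_iff _).mp hbot _ (SetLike.coe_mem _))
  · rw [GradedAlgebra.proj_apply, DFinsupp.notMem_support_iff.mp hj, ZeroMemClass.coe_zero]

section ProjRight

variable {R : Type*} [CommRing R] [Algebra K R] (ℋ : ℕ → Submodule K H) [GradedAlgebra ℋ]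

noncomputable def projRight (j : ℕ) : R ⊗[K] H →ₗ[R] R ⊗[K] H :=
  (GradedAlgebra.proj ℋ j).baseChange R

@[simp]
theorem projRight_tmul (j : ℕ) (r : R) (h : H) :
    projRight ℋ j (r ⊗ₜ[K] h) = r ⊗ₜ GradedAlgebra.proj ℋ j h :=
  rfl

theorem tmul_one_mul_eq_smul (r : R) (x : R ⊗[K] H) : r ⊗ₜ[K] (1 : H) * x = r • x := by
  rw [Algebra.smul_def, Algebra.TensorProduct.algebraMap_apply, Algebra.algebraMap_self,
    RingHom.id_apply]

theorem projRight_mul (n : ℕ) (x y : R ⊗[K] H) :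
    projRight ℋ n (x * y) = ∑ ij ∈ antidiagonal n, projRight ℋ ij.1 x * projRight ℋ ij.2 y := by
  induction x using TensorProduct.induction_on with
  | zero => simp
  | add x₁ x₂ h₁ h₂ => simp only [add_mul, map_add, h₁, h₂, sum_add_distrib]
  | tmul r h =>
    induction y using TensorProduct.induction_on with
    | zero => simp
    | add y₁ y₂ h₁ h₂ => simp only [mul_add, map_add, h₁, h₂, sum_add_distrib]
    | tmul s h' =>
      simp only [Algebra.TensorProduct.tmul_mul_tmul, projRight_tmul,
        GradedAlgebra.proj_mul_eq_sum_antidiagonal, tmul_sum]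

theorem projRight_zero_pow (x : R ⊗[K] H) (n : ℕ) :
    projRight ℋ 0 (x ^ n) = projRight ℋ 0 x ^ n := by
  induction n with
  | zero => rw [pow_zero, pow_zero, Algebra.TensorProduct.one_def, projRight_tmul,
      GradedAlgebra.proj_zero_one]
  | succ n ih => rw [pow_succ, pow_succ, projRight_mul, Nat.antidiagonal_zero, sum_singleton, ih]

theorem exists_projRight_zero_eq_tmul_one (hℋ₀ : ℋ 0 = Submodule.span K {(1 : H)})
    (x : R ⊗[K] H) : ∃ r : R, projRight ℋ 0 x = r ⊗ₜ 1 := by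
  induction x using TensorProduct.induction_on with
  | zero => exact ⟨0, by simp⟩
  | add x₁ x₂ h₁ h₂ =>
    obtain ⟨r₁, e₁⟩ := h₁
    obtain ⟨r₂, e₂⟩ := h₂
    exact ⟨r₁ + r₂, by rw [map_add, e₁, e₂, add_tmul]⟩
  | tmul r h =>
    have h₀ : GradedAlgebra.proj ℋ 0 h ∈ Submodule.span K {(1 : H)} := hℋ₀ ▸ SetLike.coe_mem _
    obtain ⟨c, hc⟩ := Submodule.mem_span_singleton.mp h₀
    exact ⟨c • r, by rw [projRight_tmul, ← hc, tmul_smul, smul_tmul']⟩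

theorem tmul_one_eq_zero_of_isNilpotent [IsReduced R] [Nontrivial H] {r : R}
    (hr : IsNilpotent (r ⊗ₜ[K] (1 : H))) : r ⊗ₜ[K] (1 : H) = 0 := by
  have hinj := Algebra.TensorProduct.includeLeft_injective (R := K) (S := R) (A := R) (B := H)
    (FaithfulSMul.algebraMap_injective K H)
  rw [← Algebra.TensorProduct.includeLeft_apply (S := R)] at hr ⊢
  rw [((IsNilpotent.map_iff hinj).mp hr).eq_zero, map_zero]

theorem projRight_zero_eq_of_isNilpotent_sub [IsReduced R] [Nontrivial H]
    (hℋ₀ : ℋ 0 = Submodule.span K {(1 : H)}) {x : R ⊗[K] H} {r : R}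
    (hx : IsNilpotent (x - r ⊗ₜ[K] (1 : H))) : projRight ℋ 0 x = r ⊗ₜ 1 := by
  obtain ⟨s, hs⟩ := exists_projRight_zero_eq_tmul_one ℋ hℋ₀ (x - r ⊗ₜ[K] (1 : H))
  obtain ⟨n, hn⟩ := hx
  have hs₀ : s ⊗ₜ[K] (1 : H) = 0 :=
    tmul_one_eq_zero_of_isNilpotent ⟨n, by rw [← hs, ← projRight_zero_pow, hn, map_zero]⟩
  rwa [hs₀, map_sub, projRight_tmul, GradedAlgebra.proj_zero_one, sub_eq_zero] at hs

theorem eq_zero_of_forall_projRight_eq_zero [FiniteDimensional K H] {x : R ⊗[K] H}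
    (hx : ∀ j, projRight ℋ j x = 0) : x = 0 := by
  obtain ⟨N, hN⟩ := GradedAlgebra.exists_sum_proj_eq_id ℋ
  calc x = (∑ j ∈ range N, GradedAlgebra.proj ℋ j).baseChange R x := by
        rw [hN, LinearMap.baseChange_id, LinearMap.id_apply]
    _ = ∑ j ∈ range N, projRight ℋ j x := by
        rw [← LinearMap.baseChangeHom_apply, map_sum, LinearMap.sum_apply]
        rfl
    _ = 0 := sum_eq_zero fun j _ => hx j

end ProjRight

theorem MvPolynomial.IsWeightedHomogeneous.eq_zero_of_dvd_of_lt {R σ : Type*} [CommSemiring R]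
    {w : σ → ℕ} {f p : MvPolynomial σ R} {df d : ℕ} (hf : IsWeightedHomogeneous w f df)
    (hp : IsWeightedHomogeneous w p d) (hd : d < df) (hdvd : f ∣ p) : p = 0 := by
  let _ := weightedGradedAlgebra R w
  obtain ⟨t, rfl⟩ := hdvd
  calc f * t = DirectSum.decompose (weightedHomogeneousSubmodule R w) (f * t) d :=
        (DirectSum.decompose_of_mem_same _ hp).symm
    _ = 0 := DirectSum.coe_decompose_mul_of_left_mem_of_not_le _ hf (by omega)

section PolyGrade

variable {σ : Type*} (w : σ → ℕ)

noncomputable def polyGrade (d : ℕ) : Submodule K (MvPolynomial σ K ⊗[K] H) :=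
  Submodule.span K
    {z | ∃ p ∈ MvPolynomial.weightedHomogeneousSubmodule K w d, ∃ h : H, z = p ⊗ₜ[K] h}

variable {w}

theorem basis_repr_mem_of_mem_polyGrade {ι : Type*} (b : Module.Basis ι K H) {d : ℕ}
    {z : MvPolynomial σ K ⊗[K] H} (hz : z ∈ polyGrade w d) (i : ι) :
    (Algebra.TensorProduct.basis (MvPolynomial σ K) b).repr z i ∈
      MvPolynomial.weightedHomogeneousSubmodule K w d := by
  induction hz using Submodule.span_induction with
  | mem x hx =>
    obtain ⟨p, hp, h, rfl⟩ := hx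
    simpa [MvPolynomial.algebraMap_eq, mul_comm p, ← MvPolynomial.C_mul']
      using Submodule.smul_mem _ (b.repr h i) hp
  | zero => simp
  | add x y _ _ hx hy => simpa using add_mem hx hy
  | smul c x _ hx =>
    rw [← algebraMap_smul (MvPolynomial σ K) c x, map_smul, Finsupp.smul_apply, algebraMap_smul]
    exact Submodule.smul_mem _ c hx

theorem mem_weightedHomogeneousSubmodule_of_tmul_one_mem_polyGrade [Nontrivial H]
    {f : MvPolynomial σ K} {d : ℕ} (hf : f ⊗ₜ[K] (1 : H) ∈ polyGrade w d) :
    f ∈ MvPolynomial.weightedHomogeneousSubmodule K w d := by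
  let b := Module.Free.chooseBasis K H
  obtain ⟨i, hi⟩ : ∃ i, b.repr 1 i ≠ 0 := by
    by_contra! h
    exact one_ne_zero (b.repr.map_eq_zero_iff.mp (Finsupp.ext h))
  have := Submodule.smul_mem _ (b.repr 1 i)⁻¹ (basis_repr_mem_of_mem_polyGrade b hf i)
  simp only [Algebra.TensorProduct.basis_repr_tmul] at this
  simpa [MvPolynomial.algebraMap_eq, mul_comm f, ← MvPolynomial.C_mul', ← mul_assoc, ← map_mul,
    hi] using this

theorem eq_zero_of_smul_add_smul_eq_zero {f g : MvPolynomial σ K} {df d : ℕ}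
    (hf : f ∈ MvPolynomial.weightedHomogeneousSubmodule K w df) (hfg : IsRelPrime f g)
    {u v : MvPolynomial σ K ⊗[K] H} (hu : u ∈ polyGrade w d) (hd : d < df)
    (huv : g • u + f • v = 0) : u = 0 := by
  let b := Algebra.TensorProduct.basis (MvPolynomial σ K) (Module.Free.chooseBasis K H)
  refine b.repr.map_eq_zero_iff.mp (Finsupp.ext fun i => ?_)
  have hi : g * b.repr u i + f * b.repr v i = 0 := by simpa using congr(b.repr $huv i)
  exact MvPolynomial.IsWeightedHomogeneous.eq_zero_of_dvd_of_lt hf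
    (basis_repr_mem_of_mem_polyGrade _ hu i) hd
    (hfg.dvd_of_dvd_mul_left ⟨-b.repr v i, by linear_combination hi⟩)

end PolyGrade

section TensorGrade

variable {nv : ℕ} {w : Fin nv → ℕ} {ℋ : ℕ → Submodule K H} [GradedAlgebra ℋ]

theorem projRight_mem_polyGrade {m : ℕ} {z : MvPolynomial (Fin nv) K ⊗[K] H}
    (hz : z ∈ tensorGrade w ℋ m) (j : ℕ) : projRight ℋ j z ∈ polyGrade w (m - j) := by
  induction hz using Submodule.span_induction with
  | mem x hx =>
    obtain ⟨i, k, rfl, p, hp, h, hh, rfl⟩ := hx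
    rw [projRight_tmul, GradedAlgebra.proj_apply]
    by_cases hkj : k = j
    · subst hkj
      rw [DirectSum.decompose_of_mem_same ℋ hh, Nat.add_sub_cancel]
      exact Submodule.subset_span ⟨p, hp, h, rfl⟩
    · rw [DirectSum.decompose_of_mem_ne ℋ hh hkj, tmul_zero]
      exact zero_mem _
  | zero => simp
  | add x y _ _ hx hy => simpa using add_mem hx hy
  | smul c x _ hx => simpa using Submodule.smul_mem _ c hx

theorem projRight_eq_zero_of_lt {m j : ℕ} {z : MvPolynomial (Fin nv) K ⊗[K] H}
    (hz : z ∈ tensorGrade w ℋ m) (hj : m < j) : projRight ℋ j z = 0 := by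
  induction hz using Submodule.span_induction with
  | mem x hx =>
    obtain ⟨i, k, rfl, p, hp, h, hh, rfl⟩ := hx
    rw [projRight_tmul, GradedAlgebra.proj_apply, DirectSum.decompose_of_mem_ne ℋ hh (by omega),
      tmul_zero]
  | zero => simp
  | add x y _ _ hx hy => rw [map_add, hx, hy, add_zero]
  | smul c x _ hx => simp [hx]

theorem eq_of_projRight_zero_eq_tmul_one [Nontrivial H] {f : MvPolynomial (Fin nv) K} {df n : ℕ}
    (hf₀ : f ≠ 0) (hf : f ∈ MvPolynomial.weightedHomogeneousSubmodule K w df)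
    {x : MvPolynomial (Fin nv) K ⊗[K] H} (hx : x ∈ tensorGrade w ℋ n)
    (hQx : projRight ℋ 0 x = f ⊗ₜ 1) : n = df := by
  have hmem := projRight_mem_polyGrade hx 0
  rw [hQx, Nat.sub_zero] at hmem
  exact (mem_weightedHomogeneousSubmodule_of_tmul_one_mem_polyGrade hmem).inj_right hf₀ hf

theorem projRight_sub_eq_zero {f g : MvPolynomial (Fin nv) K} {df : ℕ} (hf₀ : f ≠ 0)
    (hf : f ∈ MvPolynomial.weightedHomogeneousSubmodule K w df) (hfg : IsRelPrime f g)
    {a b a' b' : MvPolynomial (Fin nv) K ⊗[K] H}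
    (ha : a ∈ tensorGrade w ℋ df) (ha' : a' ∈ tensorGrade w ℋ df) (hmul : a * b = a' * b')
    (hQa : projRight ℋ 0 a = f ⊗ₜ 1) (hQa' : projRight ℋ 0 a' = f ⊗ₜ 1)
    (hQb : projRight ℋ 0 b = g ⊗ₜ 1) (hQb' : projRight ℋ 0 b' = g ⊗ₜ 1) (j : ℕ) :
    projRight ℋ j (a - a') = 0 ∧ projRight ℋ j (b - b') = 0 := by
  induction j using Nat.strong_induction_on with | _ j ih => ?_
  rcases Nat.eq_zero_or_pos j with rfl | hj
  · simp [hQa, hQa', hQb, hQb']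
  have hu : projRight ℋ j ((a - a') * b) = g • projRight ℋ j (a - a') := by
    rw [projRight_mul, sum_eq_single_of_mem (j, 0) (by simp), hQb, mul_comm, tmul_one_mul_eq_smul]
    rintro ⟨i, k⟩ hik hne
    rw [HasAntidiagonal.mem_antidiagonal] at hik
    rw [(ih i (by grind)).1, zero_mul]
  have hv : projRight ℋ j (a' * (b - b')) = f • projRight ℋ j (b - b') := by
    rw [projRight_mul, sum_eq_single_of_mem (0, j) (by simp), hQa', tmul_one_mul_eq_smul]
    rintro ⟨i, k⟩ hik hne
    rw [HasAntidiagonal.mem_antidiagonal] at hik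
    rw [(ih k (by grind)).2, mul_zero]
  have huv : g • projRight ℋ j (a - a') + f • projRight ℋ j (b - b') = 0 := by
    rw [← hu, ← hv, ← map_add, show (a - a') * b + a' * (b - b') = a * b - a' * b' by ring,
      hmul, sub_self, map_zero]
  have hu₀ : projRight ℋ j (a - a') = 0 := by
    rcases le_or_gt j df with hjd | hjd
    · have hmem : projRight ℋ j (a - a') ∈ polyGrade w (df - j) := by
        rw [map_sub]
        exact sub_mem (projRight_mem_polyGrade ha j) (projRight_mem_polyGrade ha' j)
      exact eq_zero_of_smul_add_smul_eq_zero hf hfg hmem (by omega) huv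
    · rw [map_sub, projRight_eq_zero_of_lt ha hjd, projRight_eq_zero_of_lt ha' hjd, sub_zero]
  rw [hu₀, smul_zero, zero_add] at huv
  exact ⟨hu₀, (smul_eq_zero.mp huv).resolve_left hf₀⟩

theorem eq_and_eq_of_mul_eq_mul [FiniteDimensional K H] [Nontrivial H]
    {f g : MvPolynomial (Fin nv) K} {df m m' : ℕ} (hf₀ : f ≠ 0)
    (hf : f ∈ MvPolynomial.weightedHomogeneousSubmodule K w df) (hfg : IsRelPrime f g)
    {a b a' b' : MvPolynomial (Fin nv) K ⊗[K] H}
    (ha : a ∈ tensorGrade w ℋ m) (ha' : a' ∈ tensorGrade w ℋ m') (hmul : a * b = a' * b')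
    (hQa : projRight ℋ 0 a = f ⊗ₜ 1) (hQa' : projRight ℋ 0 a' = f ⊗ₜ 1)
    (hQb : projRight ℋ 0 b = g ⊗ₜ 1) (hQb' : projRight ℋ 0 b' = g ⊗ₜ 1) :
    a = a' ∧ b = b' := by
  rw [eq_of_projRight_zero_eq_tmul_one hf₀ hf ha hQa] at ha
  rw [eq_of_projRight_zero_eq_tmul_one hf₀ hf ha' hQa'] at ha'
  have key := projRight_sub_eq_zero hf₀ hf hfg ha ha' hmul hQa hQa' hQb hQb'
  exact ⟨sub_eq_zero.mp (eq_zero_of_forall_projRight_eq_zero ℋ fun j => (key j).1),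
    sub_eq_zero.mp (eq_zero_of_forall_projRight_eq_zero ℋ fun j => (key j).2)⟩

end TensorGrade

theorem stmt_7_general {nv : ℕ} (w : Fin nv → ℕ)
    (ℋ : ℕ → Submodule K H) [GradedAlgebra ℋ]
    (hH0 : ℋ 0 = Submodule.span K {(1 : H)}) [FiniteDimensional K H]
    (f g : MvPolynomial (Fin nv) K) (df dg : ℕ)
    (hf : f ∈ MvPolynomial.weightedHomogeneousSubmodule K w df)
    (hg : g ∈ MvPolynomial.weightedHomogeneousSubmodule K w dg)
    (hfg : IsRelPrime f g)
    (a b a' b' : MvPolynomial (Fin nv) K ⊗[K] H)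
    (ha : ∃ m, a ∈ tensorGrade w ℋ m) (hb : ∃ m, b ∈ tensorGrade w ℋ m)
    (ha' : ∃ m, a' ∈ tensorGrade w ℋ m) (hb' : ∃ m, b' ∈ tensorGrade w ℋ m)
    (hmul : a * b = a' * b')
    (hna : IsNilpotent (a - f ⊗ₜ[K] (1 : H)))
    (hna' : IsNilpotent (a' - f ⊗ₜ[K] (1 : H)))
    (hnb : IsNilpotent (b - g ⊗ₜ[K] (1 : H)))
    (hnb' : IsNilpotent (b' - g ⊗ₜ[K] (1 : H))) :
    a = a' ∧ b = b' := by
  rcases subsingleton_or_nontrivial H with _ | _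
  · exact ⟨Subsingleton.elim _ _, Subsingleton.elim _ _⟩
  obtain ⟨_, ha⟩ := ha
  obtain ⟨_, hb⟩ := hb
  obtain ⟨_, ha'⟩ := ha'
  obtain ⟨_, hb'⟩ := hb'
  have hQ {x : MvPolynomial (Fin nv) K ⊗[K] H} {r : MvPolynomial (Fin nv) K}
      (hx : IsNilpotent (x - r ⊗ₜ[K] (1 : H))) : projRight ℋ 0 x = r ⊗ₜ 1 :=
    projRight_zero_eq_of_isNilpotent_sub ℋ hH0 hx
  by_cases hf₀ : f = 0
  · have hg₀ : g ≠ 0 := (isRelPrime_zero_left.mp (hf₀ ▸ hfg)).ne_zero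
    obtain ⟨rfl, rfl⟩ := eq_and_eq_of_mul_eq_mul hg₀ hg hfg.symm hb hb'
      (by rw [mul_comm, hmul, mul_comm]) (hQ hnb) (hQ hnb') (hQ hna) (hQ hna')
    exact ⟨rfl, rfl⟩
  · exact eq_and_eq_of_mul_eq_mul hf₀ hf hfg ha ha' hmul (hQ hna) (hQ hna') (hQ hnb) (hQ hnb')

/-- Two-factor uniqueness: in `A = K[x₁,…,x_n] ⊗ H` (weights positive, `H` connected
finite-dimensional nonnegatively graded), if `a·b = a'·b'` for homogeneous elements with
`a - f⊗1, a' - f⊗1, b - g⊗1, b' - g⊗1` nilpotent and `f, g` homogeneous coprime, then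
`a = a'` and `b = b'`. -/
theorem stmt_7 {nv : ℕ} (w : Fin nv → ℕ) (hw : ∀ i, 0 < w i)
    (ℋ : ℕ → Submodule K H) [GradedAlgebra ℋ]
    (hH0 : ℋ 0 = Submodule.span K {(1 : H)}) [FiniteDimensional K H]
    (f g : MvPolynomial (Fin nv) K) (df dg : ℕ)
    (hf : f ∈ MvPolynomial.weightedHomogeneousSubmodule K w df)
    (hg : g ∈ MvPolynomial.weightedHomogeneousSubmodule K w dg)
    (hfg : IsRelPrime f g)
    (a b a' b' : MvPolynomial (Fin nv) K ⊗[K] H)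
    (ha : ∃ m, a ∈ tensorGrade w ℋ m) (hb : ∃ m, b ∈ tensorGrade w ℋ m)
    (ha' : ∃ m, a' ∈ tensorGrade w ℋ m) (hb' : ∃ m, b' ∈ tensorGrade w ℋ m)
    (hmul : a * b = a' * b')
    (hna : IsNilpotent (a - f ⊗ₜ[K] (1 : H)))
    (hna' : IsNilpotent (a' - f ⊗ₜ[K] (1 : H)))
    (hnb : IsNilpotent (b - g ⊗ₜ[K] (1 : H)))
    (hnb' : IsNilpotent (b' - g ⊗ₜ[K] (1 : H))) :
    a = a' ∧ b = b' :=
  stmt_7_general w ℋ hH0 f g df dg hf hg hfg a b a' b' ha hb ha' hb' hmul hna hna' hnb hnb'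
end

section
/- Let K be a field, R = K[x₁,…,x_n] a positively graded polynomial ring, H a finite-dimensional graded commutative connected K-algebra (H⁰ = K), and A = R ⊗_K H. Fix a homogeneous element x ∈ A and pairwise coprime homogeneous elements f₁,…,f_k ∈ R. If x₁,…,x_k ∈ A are homogeneous elements with x = x₁⋯x_k such that x_i − f_i⊗1 is nilpotent for each i, then the x_i are uniquely determined by x and f₁,…,f_k (i.e., if y₁,…,y_k is another such family then x_i = y_i for all i). -/
open TensorProduct

variable {K H : Type*} [Field K] [CommRing H] [Algebra K H]

/-!
Filter `A = R ⊗ H` by `H`-degree, `F t = R ⊗ H_{≥ t}`. This filtration is multiplicative, and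
`F (D + 1) = 0` once `H` vanishes above degree `D`. The degree-`0` projection is a ring map onto
`R ⊗ 1 ≅ R` and `R` is reduced, so nilpotence of `xᵢ - fᵢ ⊗ 1` means `xᵢ ≡ fᵢ ⊗ 1 mod F 1`; when
`fᵢ ≠ 0` this also forces the homogeneous `xᵢ` to have degree `deg fᵢ`.

Suppose `xᵢ ≡ yᵢ mod F t` for all `i`, with `t ≥ 1`. Expanding `∏ xᵢ = ∏ yᵢ` to first order gives
`∑ᵢ (∏_{j ≠ i} fⱼ) eᵢ ≡ 0 mod F (t + 1)`, where `eᵢ` is the `H`-degree-`t` part of `xᵢ - yᵢ`.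
Pairing with a linear form on `H` turns this into a relation `∑ᵢ (∏_{j ≠ i} fⱼ) gᵢ = 0` in `R`, so
`fᵢ ∣ gᵢ` by coprimality, while `gᵢ` is homogeneous of degree `deg fᵢ - t < deg fᵢ`. Hence
`gᵢ = 0`, i.e. `xᵢ ≡ yᵢ mod F (t + 1)`, and by induction `xᵢ = yᵢ`.
-/

open Finset Function

section MulFiltration

variable {R S : Type*} [CommSemiring R] [CommRing S] [Algebra R S] {F : ℕ → Submodule R S}

theorem prod_sub_prod_mem_of_sub_mem (hF0 : F 0 = ⊤) (hmul : ∀ s t, F s * F t ≤ F (s + t))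
    {ι : Type*} [DecidableEq ι] (s : Finset ι) {a c : ι → S} {t : ℕ}
    (hac : ∀ i ∈ s, a i - c i ∈ F t) : ∏ i ∈ s, a i - ∏ i ∈ s, c i ∈ F t := by
  induction s using Finset.induction_on with
  | empty => simp
  | insert j s hj ih =>
    rw [prod_insert hj, prod_insert hj,
      show a j * ∏ i ∈ s, a i - c j * ∏ i ∈ s, c i
        = a j * (∏ i ∈ s, a i - ∏ i ∈ s, c i) + (a j - c j) * ∏ i ∈ s, c i by ring]
    refine add_mem ?_ ?_
    · simpa using hmul 0 t (Submodule.mul_mem_mul (hF0 ▸ Submodule.mem_top)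
        (ih fun i hi => hac i (mem_insert_of_mem hi)))
    · simpa using hmul t 0 (Submodule.mul_mem_mul (hac j (mem_insert_self j s))
        (hF0 ▸ Submodule.mem_top))

theorem prod_sub_prod_sub_sum_mem (hF0 : F 0 = ⊤) (hmul : ∀ s t, F s * F t ≤ F (s + t))
    {ι : Type*} [DecidableEq ι] (s : Finset ι) {a b c : ι → S} {t : ℕ}
    (hac : ∀ i ∈ s, a i - c i ∈ F 1) (hbc : ∀ i ∈ s, b i - c i ∈ F 1)
    (hab : ∀ i ∈ s, a i - b i ∈ F t) :
    ∏ i ∈ s, a i - ∏ i ∈ s, b i - ∑ i ∈ s, (∏ j ∈ s.erase i, c j) * (a i - b i) ∈ F (t + 1) := by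
  have mul_mem {m n : ℕ} {x y : S} (hx : x ∈ F m) (hy : y ∈ F n) : x * y ∈ F (m + n) :=
    hmul m n (Submodule.mul_mem_mul hx hy)
  have mul_mem_left {n : ℕ} (x : S) {y : S} (hy : y ∈ F n) : x * y ∈ F n := by
    simpa using mul_mem (hF0 ▸ Submodule.mem_top : x ∈ F 0) hy
  induction s using Finset.induction_on with
  | empty => simp
  | insert j s hj ih =>
    have hs : ∀ {p : ι → Prop}, (∀ i ∈ insert j s, p i) → ∀ i ∈ s, p i :=
      fun h i hi => h i (mem_insert_of_mem hi)
    set rest := ∑ i ∈ s, (∏ l ∈ s.erase i, c l) * (a i - b i)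
    have hrest : rest ∈ F t := sum_mem fun i hi =>
      mul_mem_left _ (hab i (mem_insert_of_mem hi))
    have hsum : ∑ i ∈ insert j s, (∏ l ∈ (insert j s).erase i, c l) * (a i - b i)
        = (∏ l ∈ s, c l) * (a j - b j) + c j * rest := by
      rw [sum_insert hj, erase_insert hj, mul_sum]
      congr 1
      refine sum_congr rfl fun i hi => ?_
      rw [erase_insert_of_ne (ne_of_mem_of_not_mem hi hj).symm,
        prod_insert fun h => hj (mem_of_mem_erase h), mul_assoc]
    rw [prod_insert hj, prod_insert hj, hsum,
      show a j * ∏ i ∈ s, a i - b j * ∏ i ∈ s, b i - ((∏ l ∈ s, c l) * (a j - b j) + c j * rest)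
        = (a j - c j) * rest + a j * (∏ i ∈ s, a i - ∏ i ∈ s, b i - rest)
          + (a j - b j) * (∏ i ∈ s, b i - ∏ i ∈ s, c i) by ring]
    refine add_mem (add_mem ?_ ?_) ?_
    · simpa [add_comm] using mul_mem (hac j (mem_insert_self j s)) hrest
    · exact mul_mem_left _ (ih (hs hac) (hs hbc) (hs hab))
    · exact mul_mem (hab j (mem_insert_self j s))
        (prod_sub_prod_mem_of_sub_mem hF0 hmul s (hs hbc))

end MulFiltration

theorem MvPolynomial.IsWeightedHomogeneous.le_of_dvd {σ R M : Type*} [CommSemiring R]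
    [AddCommMonoid M] [PartialOrder M] [CanonicallyOrderedAdd M] {w : σ → M}
    {f g : MvPolynomial σ R} {d e : M} (hf : IsWeightedHomogeneous w f d)
    (hg : IsWeightedHomogeneous w g e) (hg0 : g ≠ 0) (hfg : f ∣ g) : d ≤ e := by
  classical
  obtain ⟨q, rfl⟩ := hfg
  obtain ⟨m, hm⟩ := support_nonempty.mpr hg0
  obtain ⟨a, ha, b, -, rfl⟩ := Finset.mem_add.mp (support_mul f q hm)
  rw [← hg (mem_support_iff.mp hm), ← hf (mem_support_iff.mp ha), map_add]
  exact le_self_add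

theorem dvd_of_sum_prod_erase_mul_eq_zero {R ι : Type*} [CommRing R] [DecompositionMonoid R]
    [Fintype ι] [DecidableEq ι] {f g : ι → R} (hf : Pairwise (IsRelPrime on f))
    (hsum : ∑ j, (∏ l ∈ univ.erase j, f l) * g j = 0) (i : ι) : f i ∣ g i := by
  have hdvd : f i ∣ (∏ l ∈ univ.erase i, f l) * g i := by
    rw [← add_sum_erase _ _ (mem_univ i), add_eq_zero_iff_eq_neg] at hsum
    rw [hsum, dvd_neg]
    exact dvd_sum fun j hj => (dvd_prod_of_mem f (mem_erase.mpr
      ⟨(ne_of_mem_erase hj).symm, mem_univ i⟩)).mul_right _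
  exact (IsRelPrime.prod_right fun j hj => hf (ne_of_mem_erase hj).symm).dvd_of_dvd_mul_left hdvd

theorem exists_forall_lt_eq_bot_of_decomposition {M : Type*} [AddCommGroup M] [Module K M]
    [IsNoetherian K M] (ℳ : ℕ → Submodule K M) [DirectSum.Decomposition ℳ] :
    ∃ D, ∀ j, D < j → ℳ j = ⊥ := by
  classical
  obtain ⟨D, hD⟩ := (Submodule.finite_ne_bot_of_iSupIndep
    (DirectSum.Decomposition.isInternal ℳ).submodule_iSupIndep).bddAbove
  exact ⟨D, fun j hj => by_contra fun hne => (hD hne).not_gt hj⟩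

section TensorFiltration

variable {R : Type*} [CommRing R] [Algebra K R] {ℋ : ℕ → Submodule K H} [GradedAlgebra ℋ]
  {D : ℕ}

theorem sum_proj_eq_self (hD : ∀ j, D < j → ℋ j = ⊥) (h : H) :
    ∑ j ∈ range (D + 1), GradedAlgebra.proj ℋ j h = h := by
  classical
  conv_rhs => rw [← DirectSum.sum_support_decompose ℋ h]
  refine (sum_subset (fun j hj => mem_range.2 (Nat.lt_succ_of_le (not_lt.1 fun hDj => ?_)))
    fun j _ hj => ?_).symm
  · exact DFinsupp.mem_support_iff.1 hj
      (Subtype.ext ((Submodule.eq_bot_iff _).1 (hD j hDj) _ (Submodule.coe_mem _)))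
  · simpa using hj

theorem sum_baseChange_proj_eq_self (hD : ∀ j, D < j → ℋ j = ⊥) (z : R ⊗[K] H) :
    ∑ j ∈ range (D + 1), (GradedAlgebra.proj ℋ j).baseChange R z = z := by
  induction z using TensorProduct.induction_on with
  | zero => simp
  | tmul r h => simp_rw [LinearMap.baseChange_tmul, ← tmul_sum, sum_proj_eq_self hD]
  | add a b ha hb => simp_rw [map_add, sum_add_distrib, ha, hb]

variable (R ℋ) in
def tensorFiltration (t : ℕ) : Submodule K (R ⊗[K] H) :=
  Submodule.span K {z | ∃ r : R, ∃ j, t ≤ j ∧ ∃ h ∈ ℋ j, z = r ⊗ₜ h}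

theorem tensorFiltration_mul_le (s t : ℕ) :
    tensorFiltration R ℋ s * tensorFiltration R ℋ t ≤ tensorFiltration R ℋ (s + t) := by
  rw [tensorFiltration, tensorFiltration, Submodule.span_mul_span]
  refine Submodule.span_le.2 ?_
  rintro _ ⟨_, ⟨r, i, hi, h, hh, rfl⟩, _, ⟨r', j, hj, h', hh', rfl⟩, rfl⟩
  exact Submodule.subset_span ⟨r * r', i + j, by omega, h * h', SetLike.mul_mem_graded hh hh',
    Algebra.TensorProduct.tmul_mul_tmul ..⟩

theorem baseChange_proj_mem_tensorFiltration {t j : ℕ} (htj : t ≤ j) (z : R ⊗[K] H) :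
    (GradedAlgebra.proj ℋ j).baseChange R z ∈ tensorFiltration R ℋ t := by
  induction z using TensorProduct.induction_on with
  | zero => simp
  | tmul r h => exact Submodule.subset_span ⟨r, j, htj, _, Submodule.coe_mem _, rfl⟩
  | add a b ha hb => rw [map_add]; exact add_mem ha hb

theorem baseChange_proj_eq_zero_of_mem_tensorFiltration {t j : ℕ} {z : R ⊗[K] H}
    (hz : z ∈ tensorFiltration R ℋ t) (hj : j < t) :
    (GradedAlgebra.proj ℋ j).baseChange R z = 0 := by
  induction hz using Submodule.span_induction with
  | mem _ hg =>
    obtain ⟨r, i, hi, h, hh, rfl⟩ := hg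
    simp [GradedAlgebra.proj_apply, DirectSum.decompose_of_mem_ne ℋ hh (by omega : i ≠ j)]
  | zero => simp
  | add _ _ _ _ ha hb => rw [map_add, ha, hb, add_zero]
  | smul c _ _ ha => rw [LinearMap.map_smul_of_tower, ha, smul_zero]

theorem mem_tensorFiltration_of_baseChange_proj_eq_zero (hD : ∀ j, D < j → ℋ j = ⊥) {t : ℕ}
    {z : R ⊗[K] H} (hz : ∀ j < t, (GradedAlgebra.proj ℋ j).baseChange R z = 0) :
    z ∈ tensorFiltration R ℋ t := by
  rw [← sum_baseChange_proj_eq_self hD z]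
  refine sum_mem fun j _ => ?_
  rcases lt_or_ge j t with hj | hj
  · rw [hz j hj]; exact zero_mem _
  · exact baseChange_proj_mem_tensorFiltration hj z

theorem mem_tensorFiltration_succ (hD : ∀ j, D < j → ℋ j = ⊥) {t : ℕ} {z : R ⊗[K] H}
    (hz : z ∈ tensorFiltration R ℋ t) (ht : (GradedAlgebra.proj ℋ t).baseChange R z = 0) :
    z ∈ tensorFiltration R ℋ (t + 1) :=
  mem_tensorFiltration_of_baseChange_proj_eq_zero hD fun _ hj =>
    (Nat.lt_succ_iff_lt_or_eq.1 hj).elim (baseChange_proj_eq_zero_of_mem_tensorFiltration hz)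
      (· ▸ ht)

theorem tensorFiltration_zero (hD : ∀ j, D < j → ℋ j = ⊥) :
    tensorFiltration R ℋ 0 = ⊤ :=
  eq_top_iff.2 fun _ _ =>
    mem_tensorFiltration_of_baseChange_proj_eq_zero hD fun _ hj => absurd hj (Nat.not_lt_zero _)

theorem eq_zero_of_mem_tensorFiltration (hD : ∀ j, D < j → ℋ j = ⊥) {z : R ⊗[K] H}
    (hz : z ∈ tensorFiltration R ℋ (D + 1)) : z = 0 := by
  rw [← sum_baseChange_proj_eq_self hD z]
  exact sum_eq_zero fun j hj =>
    baseChange_proj_eq_zero_of_mem_tensorFiltration hz (mem_range.1 hj)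

end TensorFiltration

section BaseChange

variable {R : Type*} [CommRing R] [Algebra K R]

theorem eq_zero_of_forall_dual_baseChange_eq_zero {z : R ⊗[K] H}
    (hz : ∀ φ : Module.Dual K H, φ.baseChange R z = 0) : z = 0 := by
  let b := Module.Free.chooseBasis K H
  have hcoord (z : R ⊗[K] H) (i) :
      TensorProduct.equivFinsuppOfBasisRight b z i = Module.Dual.baseChange R (b.coord i) z := by
    induction z using TensorProduct.induction_on with
    | zero => simp
    | tmul r h => simp
    | add a c ha hc => simp [ha, hc]
  exact (TensorProduct.equivFinsuppOfBasisRight b).map_eq_zero_iff.1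
    (Finsupp.ext fun i => (hcoord z i).trans (hz _))

theorem prod_tmul_one_mul {ι : Type*} (s : Finset ι) (f : ι → R) (z : R ⊗[K] H) :
    (∏ i ∈ s, f i ⊗ₜ[K] (1 : H)) * z = (∏ i ∈ s, f i) • z := by
  simp [Algebra.smul_def, map_prod]

end BaseChange

section Augmentation

variable {R : Type*} [CommRing R] [Algebra K R] {ℋ : ℕ → Submodule K H} [GradedAlgebra ℋ]

variable (ℋ) in
def projZeroAlgHom : H →ₐ[K] H :=
  { GradedRing.projZeroRingHom ℋ with
    commutes' := fun c => DirectSum.decompose_of_mem_same ℋ (SetLike.algebraMap_mem_graded ℋ c) }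

theorem baseChange_proj_zero_eq_map (z : R ⊗[K] H) :
    (GradedAlgebra.proj ℋ 0).baseChange R z =
      Algebra.TensorProduct.map (AlgHom.id K R) (projZeroAlgHom ℋ) z := by
  induction z using TensorProduct.induction_on with
  | zero => simp
  | tmul r h => rfl
  | add a b ha hb => rw [map_add, map_add, ha, hb]

theorem exists_baseChange_proj_zero_eq_tmul_one (hH0 : ℋ 0 = Submodule.span K {(1 : H)})
    (z : R ⊗[K] H) : ∃ ρ : R, (GradedAlgebra.proj ℋ 0).baseChange R z = ρ ⊗ₜ 1 := by
  induction z using TensorProduct.induction_on with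
  | zero => exact ⟨0, by simp⟩
  | tmul r h =>
    obtain ⟨c, hc⟩ := Submodule.mem_span_singleton.1 (hH0.le (Submodule.coe_mem
      (DirectSum.decompose ℋ h 0)))
    exact ⟨c • r, by rw [LinearMap.baseChange_tmul, GradedAlgebra.proj_apply, ← hc,
      tmul_smul, smul_tmul']⟩
  | add a b ha hb =>
    obtain ⟨ρ, hρ⟩ := ha
    obtain ⟨ρ', hρ'⟩ := hb
    exact ⟨ρ + ρ', by rw [map_add, hρ, hρ', add_tmul]⟩

theorem mem_tensorFiltration_one_of_isNilpotent [IsReduced R] {D : ℕ}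
    (hD : ∀ j, D < j → ℋ j = ⊥) (hH0 : ℋ 0 = Submodule.span K {(1 : H)}) {z : R ⊗[K] H}
    (hz : IsNilpotent z) : z ∈ tensorFiltration R ℋ 1 := by
  refine mem_tensorFiltration_of_baseChange_proj_eq_zero hD fun j hj => ?_
  obtain rfl : j = 0 := by omega
  obtain ⟨ρ, hρ⟩ := exists_baseChange_proj_zero_eq_tmul_one hH0 z
  nontriviality H
  have hρnil : IsNilpotent (Algebra.TensorProduct.includeLeft (S := K) ρ : R ⊗[K] H) := by
    rw [Algebra.TensorProduct.includeLeft_apply, ← hρ, baseChange_proj_zero_eq_map]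
    exact hz.map _
  rw [hρ, ((IsNilpotent.map_iff (Algebra.TensorProduct.includeLeft_injective
    (algebraMap K H).injective)).1 hρnil).eq_zero, zero_tmul]

end Augmentation

section Homogeneity

open MvPolynomial

variable {nv : ℕ} {w : Fin nv → ℕ} {ℋ : ℕ → Submodule K H} [GradedAlgebra ℋ]

theorem baseChange_proj_eq_zero_of_mem_tensorGrade {m t : ℕ}
    {z : MvPolynomial (Fin nv) K ⊗[K] H} (hz : z ∈ tensorGrade w ℋ m) (hmt : m < t) :
    (GradedAlgebra.proj ℋ t).baseChange _ z = 0 := by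
  induction hz using Submodule.span_induction with
  | mem _ hg =>
    obtain ⟨a, b, hab, r, -, h, hh, rfl⟩ := hg
    simp [GradedAlgebra.proj_apply, DirectSum.decompose_of_mem_ne ℋ hh (by omega : b ≠ t)]
  | zero => simp
  | add _ _ _ _ ha hb => rw [map_add, ha, hb, add_zero]
  | smul c _ _ ha => rw [LinearMap.map_smul_of_tower, ha, smul_zero]

theorem dual_baseChange_proj_mem_of_mem_tensorGrade {m t : ℕ} (φ : Module.Dual K H)
    {z : MvPolynomial (Fin nv) K ⊗[K] H} (hz : z ∈ tensorGrade w ℋ m) :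
    Module.Dual.baseChange _ φ ((GradedAlgebra.proj ℋ t).baseChange _ z) ∈
      weightedHomogeneousSubmodule K w (m - t) := by
  induction hz using Submodule.span_induction with
  | mem _ hg =>
    obtain ⟨a, b, rfl, r, hr, h, hh, rfl⟩ := hg
    rw [LinearMap.baseChange_tmul, Module.Dual.baseChange_apply_tmul]
    rcases eq_or_ne b t with rfl | hbt
    · simpa using Submodule.smul_mem _ _ hr
    · simp [GradedAlgebra.proj_apply, DirectSum.decompose_of_mem_ne ℋ hh hbt]
  | zero => simp
  | add _ _ _ _ ha hb => rw [map_add, map_add]; exact add_mem ha hb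
  | smul c _ _ ha =>
    rw [LinearMap.map_smul_of_tower, LinearMap.map_smul_of_tower]; exact Submodule.smul_mem _ c ha

theorem mem_tensorGrade_of_sub_tmul_one_mem [Nontrivial H] {f : MvPolynomial (Fin nv) K}
    {d m : ℕ} (hf : f ∈ weightedHomogeneousSubmodule K w d) (hf0 : f ≠ 0)
    {z : MvPolynomial (Fin nv) K ⊗[K] H} (hz : z ∈ tensorGrade w ℋ m)
    (hzf : z - f ⊗ₜ 1 ∈ tensorFiltration _ ℋ 1) : z ∈ tensorGrade w ℋ d := by
  obtain ⟨φ, hφ⟩ : ∃ φ : Module.Dual K H, φ 1 ≠ 0 := by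
    by_contra! h
    exact one_ne_zero ((Module.forall_dual_apply_eq_zero_iff K (1 : H)).1 h)
  have hz0 : (GradedAlgebra.proj ℋ 0).baseChange _ z = f ⊗ₜ 1 := by
    have := baseChange_proj_eq_zero_of_mem_tensorFiltration hzf zero_lt_one
    rwa [map_sub, LinearMap.baseChange_tmul, show GradedAlgebra.proj ℋ 0 1 = 1 from
      map_one (projZeroAlgHom ℋ), sub_eq_zero] at this
  have hfm : f ∈ weightedHomogeneousSubmodule K w m := by
    have := dual_baseChange_proj_mem_of_mem_tensorGrade (t := 0) φ hz
    rwa [hz0, Module.Dual.baseChange_apply_tmul, Nat.sub_zero, Submodule.smul_mem_iff _ hφ] at this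
  rwa [← ((mem_weightedHomogeneousSubmodule _ _ _ _).1 hfm).inj_right hf0
    ((mem_weightedHomogeneousSubmodule _ _ _ _).1 hf)]

theorem baseChange_proj_eq_zero_of_sum_mem {ι : Type*} [Fintype ι] [DecidableEq ι]
    {f : ι → MvPolynomial (Fin nv) K} {df : ι → ℕ}
    (hf : ∀ i, f i ∈ weightedHomogeneousSubmodule K w (df i)) (hcop : Pairwise (IsRelPrime on f))
    {e : ι → MvPolynomial (Fin nv) K ⊗[K] H} (he : ∀ i, f i ≠ 0 → e i ∈ tensorGrade w ℋ (df i))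
    {t : ℕ} (ht : 1 ≤ t)
    (hsum : ∑ i, (∏ j ∈ univ.erase i, f j ⊗ₜ[K] (1 : H)) * e i ∈ tensorFiltration _ ℋ (t + 1))
    (i : ι) : (GradedAlgebra.proj ℋ t).baseChange _ (e i) = 0 := by
  refine eq_zero_of_forall_dual_baseChange_eq_zero fun φ => ?_
  set g := fun j => Module.Dual.baseChange _ φ ((GradedAlgebra.proj ℋ t).baseChange _ (e j))
  have hg : ∑ j, (∏ l ∈ univ.erase j, f l) * g j = 0 := by
    have := congrArg (Module.Dual.baseChange _ φ)
      (baseChange_proj_eq_zero_of_mem_tensorFiltration hsum (lt_add_one t))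
    simpa [g, prod_tmul_one_mul] using this
  have hdvd := dvd_of_sum_prod_erase_mul_eq_zero hcop hg i
  change g i = 0
  by_cases hfi : f i = 0
  · exact zero_dvd_iff.1 (hfi ▸ hdvd)
  rcases lt_or_ge (df i) t with hlt | hle
  · simp [g, baseChange_proj_eq_zero_of_mem_tensorGrade (he i hfi) hlt]
  by_contra hgi
  have := ((mem_weightedHomogeneousSubmodule _ _ _ _).1 (hf i)).le_of_dvd
    ((mem_weightedHomogeneousSubmodule _ _ _ _).1
      (dual_baseChange_proj_mem_of_mem_tensorGrade φ (he i hfi))) hgi hdvd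
  omega

end Homogeneity

theorem stmt_8_general {nv : ℕ} (w : Fin nv → ℕ)
    (ℋ : ℕ → Submodule K H) [GradedAlgebra ℋ]
    (hH0 : ℋ 0 = Submodule.span K {(1 : H)}) [FiniteDimensional K H]
    (k : ℕ) (f : Fin k → MvPolynomial (Fin nv) K) (df : Fin k → ℕ)
    (hf : ∀ i, f i ∈ MvPolynomial.weightedHomogeneousSubmodule K w (df i))
    (hcop : ∀ i j, i ≠ j → IsRelPrime (f i) (f j))
    (x : MvPolynomial (Fin nv) K ⊗[K] H)
    (xs ys : Fin k → MvPolynomial (Fin nv) K ⊗[K] H)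
    (hxs : ∀ i, ∃ m, xs i ∈ tensorGrade w ℋ m)
    (hys : ∀ i, ∃ m, ys i ∈ tensorGrade w ℋ m)
    (hxprod : x = ∏ i, xs i) (hyprod : x = ∏ i, ys i)
    (hnx : ∀ i, IsNilpotent (xs i - (f i) ⊗ₜ[K] (1 : H)))
    (hny : ∀ i, IsNilpotent (ys i - (f i) ⊗ₜ[K] (1 : H))) :
    ∀ i, xs i = ys i := by
  nontriviality H
  obtain ⟨D, hD⟩ := exists_forall_lt_eq_bot_of_decomposition ℋ
  have hx1 i := mem_tensorFiltration_one_of_isNilpotent hD hH0 (hnx i)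
  have hy1 i := mem_tensorFiltration_one_of_isNilpotent hD hH0 (hny i)
  have hgrade (i) (hfi : f i ≠ 0) : xs i - ys i ∈ tensorGrade w ℋ (df i) :=
    sub_mem (mem_tensorGrade_of_sub_tmul_one_mem (hf i) hfi (hxs i).choose_spec (hx1 i))
      (mem_tensorGrade_of_sub_tmul_one_mem (hf i) hfi (hys i).choose_spec (hy1 i))
  have hsub : ∀ t, 1 ≤ t → ∀ i, xs i - ys i ∈ tensorFiltration _ ℋ t := by
    intro t ht
    induction t, ht using Nat.le_induction with
    | base => exact fun i => by simpa using sub_mem (hx1 i) (hy1 i)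
    | succ t ht ih =>
      have hsum := prod_sub_prod_sub_sum_mem (tensorFiltration_zero hD) tensorFiltration_mul_le
        univ (fun i _ => hx1 i) (fun i _ => hy1 i) fun i _ => ih i
      rw [← hxprod, ← hyprod, sub_self, zero_sub, neg_mem_iff] at hsum
      exact fun i => mem_tensorFiltration_succ hD (ih i)
        (baseChange_proj_eq_zero_of_sum_mem hf (fun i j => hcop i j) hgrade ht hsum i)
  exact fun i => sub_eq_zero.1 (eq_zero_of_mem_tensorFiltration hD (hsub (D + 1) (by omega) i))

/-- Uniqueness of product decompositions in `A = K[x₁,…,x_n] ⊗ H`: if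
`x = x₁⋯x_k = y₁⋯y_k` with all factors homogeneous and `x_i - f_i⊗1`, `y_i - f_i⊗1`
nilpotent for pairwise coprime homogeneous `f_i`, then `x_i = y_i` for all `i`. -/
theorem stmt_8 {nv : ℕ} (w : Fin nv → ℕ) (hw : ∀ i, 0 < w i)
    (ℋ : ℕ → Submodule K H) [GradedAlgebra ℋ]
    (hH0 : ℋ 0 = Submodule.span K {(1 : H)}) [FiniteDimensional K H]
    (k : ℕ) (f : Fin k → MvPolynomial (Fin nv) K) (df : Fin k → ℕ)
    (hf : ∀ i, f i ∈ MvPolynomial.weightedHomogeneousSubmodule K w (df i))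
    (hcop : ∀ i j, i ≠ j → IsRelPrime (f i) (f j))
    (x : MvPolynomial (Fin nv) K ⊗[K] H) (hx : ∃ m, x ∈ tensorGrade w ℋ m)
    (xs ys : Fin k → MvPolynomial (Fin nv) K ⊗[K] H)
    (hxs : ∀ i, ∃ m, xs i ∈ tensorGrade w ℋ m)
    (hys : ∀ i, ∃ m, ys i ∈ tensorGrade w ℋ m)
    (hxprod : x = ∏ i, xs i) (hyprod : x = ∏ i, ys i)
    (hnx : ∀ i, IsNilpotent (xs i - (f i) ⊗ₜ[K] (1 : H)))
    (hny : ∀ i, IsNilpotent (ys i - (f i) ⊗ₜ[K] (1 : H))) :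
    ∀ i, xs i = ys i :=
  stmt_8_general w ℋ hH0 k f df hf hcop x xs ys hxs hys hxprod hyprod hnx hny
end

section
/- Let K be a field, B a commutative K-algebra, P a commutative ring graded in nonnegative degrees, and C a graded commutative P-algebra that is generated as a P-module by finitely many homogeneous elements of degree ≤ d, with C graded in nonnegative degrees. Form A = B ⊗_K C. If x ∈ B ⊗_K C^{>0} (i.e., the component of x in B ⊗ C⁰ vanishes, where C^{>0} is the span of positive-degree homogeneous elements), then x^{d+1} lies in the ideal of A generated by 1 ⊗ (P⁺·C), where P⁺ ⊂ P is the ideal of positive-degree elements. In particular the image of x in A/(B ⊗ P⁺C) is nilpotent. -/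
/-!
Since `C` is spanned over `P` by elements of degree `≤ d`, every homogeneous element of `C` of
degree `> d` lies in `P⁺C`: write it as `∑ pₖ gₖ` and compare degrees. A product of `d + 1`
elements of `B ⊗ C^{>0}` lies in `B ⊗ C^{≥ d+1}`, hence in the ideal generated by `1 ⊗ P⁺C`.
-/

open TensorProduct

section GradedModuleOverGradedRing

variable {P C σP σC : Type*} [CommSemiring P] [CommSemiring C] [Algebra P C]
  [SetLike σP P] [AddSubmonoidClass σP P] [SetLike σC C] [AddSubmonoidClass σC C]
  (gP : ℕ → σP) [GradedRing gP] (gC : ℕ → σC) [GradedRing gC]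

theorem coe_decompose_mem_of_span_degree_le
    (hcompat : ∀ (n : ℕ) (p : P), p ∈ gP n → algebraMap P C p ∈ gC n)
    {J : Ideal C} (hJ : ∀ (n : ℕ) (p : P), 0 < n → p ∈ gP n → algebraMap P C p ∈ J)
    {d : ℕ} {gens : Set C} (hdeg : ∀ c ∈ gens, ∃ j ≤ d, c ∈ gC j)
    (hspan : Submodule.span P gens = ⊤) (y : C) {m : ℕ} (hm : d < m) :
    (DirectSum.decompose gC y m : C) ∈ J := by
  have hy : y ∈ Submodule.span P gens := hspan ▸ Submodule.mem_top
  induction hy using Submodule.span_induction generalizing m with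
  | mem g hg =>
    obtain ⟨j, hjd, hgj⟩ := hdeg g hg
    rw [DirectSum.decompose_of_mem_ne gC hgj (by omega)]
    exact J.zero_mem
  | zero => simp
  | add a b _ _ iha ihb =>
    rw [DirectSum.decompose_add, DFinsupp.add_apply, AddMemClass.coe_add]
    exact J.add_mem (iha hm) (ihb hm)
  | smul p y _ ih =>
    classical
    -- Split `p` into homogeneous parts `p k`: for `k = 0` use the induction hypothesis,
    -- for `k > 0` the factor `p k` itself lies in `J`.
    rw [← DirectSum.sum_support_decompose gP p, Finset.sum_smul, DirectSum.decompose_sum,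
      DFinsupp.finsetSum_apply, AddSubmonoidClass.coe_finsetSum]
    refine J.sum_mem fun k _ => ?_
    have hpk := hcompat k _ (SetLike.coe_mem (DirectSum.decompose gP p k))
    rw [Algebra.smul_def]
    by_cases hkm : k ≤ m
    · rw [DirectSum.coe_decompose_mul_of_left_mem_of_le gC hpk hkm]
      rcases Nat.eq_zero_or_pos k with rfl | hk
      · exact J.mul_mem_left _ (ih (by omega))
      · exact J.mul_mem_right _ (hJ k _ hk (SetLike.coe_mem _))
    · rw [DirectSum.coe_decompose_mul_of_left_mem_of_not_le gC hpk hkm]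
      exact J.zero_mem

end GradedModuleOverGradedRing

section TensorDegreeFiltration

variable {K C : Type*} (B : Type*) [CommSemiring K] [Semiring B] [Algebra K B]
  [Semiring C] [Algebra K C] (gC : ℕ → Submodule K C)

def tensorDegreeGE (i : ℕ) : Submodule K (B ⊗[K] C) :=
  Submodule.span K {z | ∃ b : B, ∃ c : C, (∃ n, i ≤ n ∧ c ∈ gC n) ∧ z = b ⊗ₜ[K] c}

variable {B gC}

theorem mul_mem_tensorDegreeGE [SetLike.GradedMonoid gC] {i j : ℕ} {x y : B ⊗[K] C}
    (hx : x ∈ tensorDegreeGE B gC i) (hy : y ∈ tensorDegreeGE B gC j) :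
    x * y ∈ tensorDegreeGE B gC (i + j) := by
  refine Submodule.mul_le.mp ?_ x hx y hy
  rw [tensorDegreeGE, tensorDegreeGE, Submodule.span_mul_span, Submodule.span_le]
  rintro _ ⟨_, ⟨b, c, ⟨n, hn, hc⟩, rfl⟩, _, ⟨b', c', ⟨n', hn', hc'⟩, rfl⟩, rfl⟩
  exact Submodule.subset_span ⟨b * b', c * c', ⟨n + n', by omega, SetLike.mul_mem_graded hc hc'⟩,
    Algebra.TensorProduct.tmul_mul_tmul b b' c c'⟩

theorem pow_succ_mem_tensorDegreeGE [SetLike.GradedMonoid gC] {i : ℕ} {x : B ⊗[K] C}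
    (hx : x ∈ tensorDegreeGE B gC i) (k : ℕ) :
    x ^ (k + 1) ∈ tensorDegreeGE B gC ((k + 1) * i) := by
  induction k with
  | zero => simpa using hx
  | succ k ih =>
    rw [pow_succ, add_one_mul (k + 1)]
    exact mul_mem_tensorDegreeGE ih hx

theorem tensorDegreeGE_le_map_includeRight {i : ℕ} {J : Ideal C}
    (hJ : ∀ (n : ℕ) (c : C), i ≤ n → c ∈ gC n → c ∈ J) :
    tensorDegreeGE B gC i ≤
      (J.map (Algebra.TensorProduct.includeRight : C →ₐ[K] B ⊗[K] C)).restrictScalars K := by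
  rw [tensorDegreeGE, Submodule.span_le]
  rintro _ ⟨b, c, ⟨n, hn, hc⟩, rfl⟩
  have hbc : b ⊗ₜ[K] c = (b ⊗ₜ[K] (1 : C)) * Algebra.TensorProduct.includeRight c := by
    rw [Algebra.TensorProduct.includeRight_apply, Algebra.TensorProduct.tmul_mul_tmul,
      mul_one, one_mul]
  rw [SetLike.mem_coe, Submodule.restrictScalars_mem, hbc]
  exact Ideal.mul_mem_left _ _ (Ideal.mem_map_of_mem _ (hJ n c hn hc))

end TensorDegreeFiltration

/-- Let `C` be a graded `P`-algebra generated as a `P`-module by finitely many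
homogeneous elements of degree ≤ `d`, and `A = B ⊗_K C`. If `x ∈ B ⊗ C^{>0}` then
`x^(d+1)` lies in the ideal of `A` generated by `1 ⊗ (P⁺·C)`; in particular `x` is
nilpotent modulo that ideal. -/
theorem stmt_10 (K B P C : Type*) [Field K] [CommRing B] [Algebra K B]
    [CommRing P] [CommRing C] [Algebra K C] [Algebra P C]
    (gP : ℕ → AddSubgroup P) [GradedRing gP]
    (gC : ℕ → Submodule K C) [GradedAlgebra gC]
    (hcompat : ∀ (n : ℕ) (p : P), p ∈ gP n → algebraMap P C p ∈ gC n)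
    (d : ℕ) (gens : Finset C)
    (hdeg : ∀ c ∈ gens, ∃ j ≤ d, c ∈ gC j)
    (hspan : Submodule.span P (gens : Set C) = ⊤)
    (x : B ⊗[K] C)
    (hx : x ∈ Submodule.span K
      {z : B ⊗[K] C | ∃ b : B, ∃ c : C, (∃ n, 0 < n ∧ c ∈ gC n) ∧ z = b ⊗ₜ[K] c}) :
    x ^ (d + 1) ∈ Ideal.map
        (Algebra.TensorProduct.includeRight : C →ₐ[K] B ⊗[K] C)
        (Ideal.span ((algebraMap P C) '' {p : P | ∃ n, 0 < n ∧ p ∈ gP n})) ∧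
    IsNilpotent (Ideal.Quotient.mk
      (Ideal.map (Algebra.TensorProduct.includeRight : C →ₐ[K] B ⊗[K] C)
        (Ideal.span ((algebraMap P C) '' {p : P | ∃ n, 0 < n ∧ p ∈ gP n}))) x) := by
  set J := Ideal.span ((algebraMap P C) '' {p : P | ∃ n, 0 < n ∧ p ∈ gP n})
  have hJ (n : ℕ) (p : P) (hn : 0 < n) (hp : p ∈ gP n) : algebraMap P C p ∈ J :=
    Ideal.subset_span ⟨p, ⟨n, hn, hp⟩, rfl⟩
  have hhigh (n : ℕ) (c : C) (hn : d + 1 ≤ n) (hc : c ∈ gC n) : c ∈ J := by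
    simpa [DirectSum.decompose_of_mem_same gC hc] using
      coe_decompose_mem_of_span_degree_le gP gC hcompat hJ hdeg hspan c (m := n) (by omega)
  have hx1 : x ∈ tensorDegreeGE B gC 1 := hx -- `0 < n` is `1 ≤ n` by definition on `ℕ`
  have hmem : x ^ (d + 1) ∈ J.map Algebra.TensorProduct.includeRight :=
    tensorDegreeGE_le_map_includeRight hhigh (by simpa using pow_succ_mem_tensorDegreeGE hx1 d)
  exact ⟨hmem, d + 1, by rw [← map_pow, Ideal.Quotient.eq_zero_iff_mem]; exact hmem⟩
end

section
/- Let D be a commutative integral domain and A = A₁ × ⋯ × A_k a product of commutative D-algebras, where each A_m = D ⊗ H_m with H_m = D·1 ⊕ H_m⁺ a decomposition such that D ⊗ H_m⁺ is a nilpotent ideal of A_m. Fix i and let τ ∈ A be an element whose component in A_j is zero for all j ≠ i and whose component in A_i is not nilpotent. Then for x ∈ A and f ∈ D, the element (f·1 − x)·τ is nilpotent in A if and only if the D-component (i.e., the D ⊗ 1 part) of the i-th component of x equals f. -/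
/-!
The quotient `A i ⧸ I i` is a copy of the domain `D`, so `I i` is a prime ideal; being
nilpotent, it is then exactly the nilradical of `A i`. As `τ` lives on the factor `i`,
nilpotency of `(f·1 − x)·τ` is decided there, and primality of `I i` cancels the factor
`τ i ∉ I i`, leaving `f·1 − x i ∈ I i`, i.e. `f = πD (x i)`.
-/

theorem Pi.isNilpotent_mul_iff_of_eq_zero {ι : Type*} {R : ι → Type*}
    [∀ j, MonoidWithZero (R j)] {y τ : ∀ j, R j} {i : ι} (hτ : ∀ j, j ≠ i → τ j = 0) :
    IsNilpotent (y * τ) ↔ IsNilpotent (y i * τ i) := by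
  constructor
  · exact fun ⟨n, hn⟩ ↦ ⟨n, by simpa using congrFun hn i⟩
  · rintro ⟨n, hn⟩
    refine ⟨n + 1, funext fun j ↦ ?_⟩
    rcases eq_or_ne j i with rfl | hji
    · simp [pow_succ, hn]
    · simp [hτ j hji]

theorem Ideal.isNilpotent_iff_mem_of_isPrime {R : Type*} [CommSemiring R] {I : Ideal R}
    (hI : IsNilpotent I) [I.IsPrime] {a : R} : IsNilpotent a ↔ a ∈ I := by
  refine ⟨fun ha ↦ nilradical_le_prime I (mem_nilradical.mpr ha), fun ha ↦ ?_⟩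
  obtain ⟨n, hn⟩ := hI
  exact ⟨n, by simpa [hn] using Ideal.pow_mem_pow ha n⟩

section SplitIdeal

variable {D R : Type*} [CommRing D] [CommRing R] [Algebra D R] {I : Ideal R} {π : R → D}

theorem algebraMap_quotient_bijective_of_split
    (hdec : ∀ a, a - algebraMap D R (π a) ∈ I) (hdisj : ∀ c, algebraMap D R c ∈ I → c = 0) :
    Function.Bijective (algebraMap D (R ⧸ I)) := by
  refine ⟨(injective_iff_map_eq_zero _).mpr fun c hc ↦ hdisj c ?_, fun q ↦ ?_⟩
  · rwa [← Ideal.Quotient.mk_algebraMap, Ideal.Quotient.eq_zero_iff_mem] at hc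
  · obtain ⟨a, rfl⟩ := Ideal.Quotient.mk_surjective q
    exact ⟨π a, (Ideal.Quotient.eq.mpr (hdec a)).symm⟩

theorem Ideal.isPrime_of_split [IsDomain D]
    (hdec : ∀ a, a - algebraMap D R (π a) ∈ I) (hdisj : ∀ c, algebraMap D R c ∈ I → c = 0) :
    I.IsPrime := by
  have : IsDomain (R ⧸ I) :=
    (RingEquiv.ofBijective _ (algebraMap_quotient_bijective_of_split hdec hdisj)).symm
      |>.toMulEquiv.isDomain D
  exact (Ideal.Quotient.isDomain_iff_prime I).mp this

theorem algebraMap_sub_mem_iff_of_split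
    (hdec : ∀ a, a - algebraMap D R (π a) ∈ I) (hdisj : ∀ c, algebraMap D R c ∈ I → c = 0)
    (f : D) (a : R) : algebraMap D R f - a ∈ I ↔ π a = f := by
  have hsplit : algebraMap D R f - a =
      algebraMap D R (f - π a) - (a - algebraMap D R (π a)) := by
    rw [map_sub]; ring
  rw [hsplit, I.sub_mem_iff_left (hdec a), eq_comm, ← sub_eq_zero]
  exact ⟨hdisj _, fun h ↦ by rw [h, map_zero]; exact I.zero_mem⟩

end SplitIdeal

/-- Detection of restrictions via local Thom classes. Each factor `A m` is a
`D`-algebra of the form `D·1 ⊕ I m` with `I m` a nilpotent ideal, and `πD m` reads off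
the `D`-component. If `τ` is supported on the factor `i` with non-nilpotent component
there, then `(f·1 − x)·τ` is nilpotent iff the `D`-component of `x i` equals `f`. -/
theorem stmt_11 (D : Type*) [CommRing D] [IsDomain D] (k : ℕ)
    (A : Fin k → Type*) [∀ m, CommRing (A m)] [∀ m, Algebra D (A m)]
    (I : ∀ m, Ideal (A m)) (hInil : ∀ m, IsNilpotent (I m))
    (piD : ∀ m, A m → D)
    (hdec : ∀ m (a : A m), a - algebraMap D (A m) (piD m a) ∈ I m)
    (hdisj : ∀ m (c : D), algebraMap D (A m) c ∈ I m → c = 0)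
    (i : Fin k) (τ : ∀ m, A m)
    (hτ0 : ∀ j, j ≠ i → τ j = 0) (hτi : ¬ IsNilpotent (τ i))
    (x : ∀ m, A m) (f : D) :
    IsNilpotent (((fun m => algebraMap D (A m) f) - x) * τ) ↔ piD i (x i) = f := by
  have hprime : (I i).IsPrime := Ideal.isPrime_of_split (hdec i) (hdisj i)
  rw [Pi.isNilpotent_mul_iff_of_eq_zero hτ0]
  rw [Ideal.isNilpotent_iff_mem_of_isPrime (hInil i)] at hτi ⊢
  rw [hprime.mul_mem_iff_mem_or_mem, or_iff_left hτi]
  exact algebraMap_sub_mem_iff_of_split (hdec i) (hdisj i) f (x i)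
end
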